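/- arXiv:1505.02371 — 2 statements merged into one kernel-verified Lean document; each statement's English description precedes it below -/
import Mathlib

section
/- A clause-set F is satisfiable if and only if its lean kernel is empty: F ∈ SAT ⇔ Na(F) = ∅. -/
open scoped Classical

abbrev Var := ℕ
abbrev Lit := Var × Bool
abbrev Clause := Finset Lit
abbrev ClauseSet := Finset Clause
abbrev PAssign := Var → Option Bool

def Lit.neg (x : Lit) : Lit := (x.1, !x.2)

def clauseVars (C : Clause) : Finset Var := C.image Prod.fst

def csVars (F : ClauseSet) : Finset Var := F.biUnion clauseVars

def paVars (φ : PAssign) : Set Var := {v | φ v ≠ none}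

def litTrue (φ : PAssign) (x : Lit) : Prop := φ x.1 = some x.2

def litFalse (φ : PAssign) (x : Lit) : Prop := φ x.1 = some (!x.2)

def satClause (φ : PAssign) (C : Clause) : Prop := ∃ x ∈ C, litTrue φ x

def touches (φ : PAssign) (C : Clause) : Prop := ∃ x ∈ C, φ x.1 ≠ none

def isAutarky (φ : PAssign) (F : ClauseSet) : Prop := ∀ C ∈ F, touches φ C → satClause φ C

noncomputable def applyPA (φ : PAssign) (F : ClauseSet) : ClauseSet :=
  (F.filter fun C => ¬ satClause φ C).image fun C => C.filter fun x => ¬ litFalse φ x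

def satCS (F : ClauseSet) : Prop := ∃ φ : PAssign, applyPA φ F = ∅

def isLean (F : ClauseSet) : Prop :=
  ∀ φ : PAssign, isAutarky φ F → paVars φ ⊆ ↑(csVars F) → ∀ v, φ v = none

noncomputable def leanKernel (F : ClauseSet) : ClauseSet :=
  (F.powerset.filter isLean).sup id

def varAut (F : ClauseSet) : Set Var :=
  {v | ∃ φ : PAssign, isAutarky φ F ∧ paVars φ ⊆ ↑(csVars F) ∧ φ v ≠ none}

/-! A satisfying assignment, restricted to the variables of a lean subset `G`, is an autarky of `G`
and hence trivial, so `G` has no clause. Conversely, if the lean kernel is empty then `F` is not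
lean, so some autarky satisfies a clause of `F`; the clauses it leaves unsatisfied form a strictly
smaller clause-set whose lean kernel is still empty, and a satisfying assignment of that set,
used where the autarky is undefined, satisfies `F`. -/

lemma mem_csVars {F : ClauseSet} {C : Clause} {x : Lit} (hC : C ∈ F) (hx : x ∈ C) :
    x.1 ∈ csVars F :=
  Finset.mem_biUnion.mpr ⟨C, hC, Finset.mem_image.mpr ⟨x, hx, rfl⟩⟩

lemma applyPA_eq_empty_iff (φ : PAssign) (F : ClauseSet) :
    applyPA φ F = ∅ ↔ ∀ C ∈ F, satClause φ C := by
  simp [applyPA, Finset.filter_eq_empty_iff]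

lemma satCS_iff (F : ClauseSet) : satCS F ↔ ∃ φ : PAssign, ∀ C ∈ F, satClause φ C := by
  simp only [satCS, applyPA_eq_empty_iff]

lemma subset_leanKernel {F G : ClauseSet} (hGF : G ⊆ F) (hG : isLean G) : G ⊆ leanKernel F :=
  Finset.le_sup (f := id) (Finset.mem_filter.mpr ⟨Finset.mem_powerset.mpr hGF, hG⟩)

lemma leanKernel_mono {F G : ClauseSet} (h : G ⊆ F) : leanKernel G ⊆ leanKernel F :=
  Finset.sup_mono (Finset.filter_subset_filter _ (Finset.powerset_mono.mpr h))

lemma leanKernel_eq_empty_iff (F : ClauseSet) :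
    leanKernel F = ∅ ↔ ∀ G ⊆ F, isLean G → G = ∅ := by
  refine ⟨fun h G hGF hG => Finset.subset_empty.mp (h ▸ subset_leanKernel hGF hG), fun h => ?_⟩
  refine Finset.subset_empty.mp (Finset.sup_le fun G hG => ?_)
  obtain ⟨hGF, hGlean⟩ := Finset.mem_filter.mp hG
  exact (h G (Finset.mem_powerset.mp hGF) hGlean).subset

def restrictPA (φ : PAssign) (S : Finset Var) : PAssign := fun v => if v ∈ S then φ v else none

lemma paVars_restrictPA_subset (φ : PAssign) (S : Finset Var) : paVars (restrictPA φ S) ⊆ ↑S := by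
  intro v hv
  by_contra hvS
  exact hv (if_neg hvS)

lemma satClause_restrictPA {φ : PAssign} {F : ClauseSet} {C : Clause} (hC : C ∈ F)
    (h : satClause φ C) : satClause (restrictPA φ (csVars F)) C := by
  obtain ⟨x, hx, hxt⟩ := h
  exact ⟨x, hx, (if_pos (mem_csVars hC hx)).trans hxt⟩

lemma isLean.eq_empty_of_forall_satClause {G : ClauseSet} (hG : isLean G) {φ : PAssign}
    (hφ : ∀ C ∈ G, satClause φ C) : G = ∅ := by
  set ψ := restrictPA φ (csVars G)
  have hψ : ∀ C ∈ G, satClause ψ C := fun C hC => satClause_restrictPA hC (hφ C hC)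
  have hψ_none : ∀ v, ψ v = none :=
    hG ψ (fun C hC _ => hψ C hC) (paVars_restrictPA_subset φ _)
  refine Finset.eq_empty_of_forall_notMem fun C hC => ?_
  obtain ⟨x, -, hxt⟩ := hψ C hC
  exact Option.some_ne_none _ (hxt.symm.trans (hψ_none x.1))

section Autarky

variable {φ : PAssign} {F : ClauseSet}

lemma exists_satClause_of_not_isLean (h : ¬ isLean F) :
    ∃ φ : PAssign, isAutarky φ F ∧ ∃ C ∈ F, satClause φ C := by
  simp only [isLean, not_forall] at h
  obtain ⟨φ, haut, hvars, v, hv⟩ := h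
  obtain ⟨C, hC, hvC⟩ := Finset.mem_biUnion.mp (hvars hv)
  obtain ⟨x, hx, rfl⟩ := Finset.mem_image.mp hvC
  exact ⟨φ, haut, C, hC, haut C hC ⟨x, hx, hv⟩⟩

-- An autarky falsifies no literal of a clause it leaves unsatisfied, so it only deletes clauses.
lemma isAutarky.applyPA_eq_filter (h : isAutarky φ F) :
    applyPA φ F = F.filter fun C => ¬ satClause φ C := by
  refine (Finset.image_congr fun C hC => Finset.filter_true_of_mem fun x hx hfalse => ?_).trans
    Finset.image_id
  obtain ⟨hCF, hns⟩ := Finset.mem_filter.mp hC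
  exact hns (h C hCF ⟨x, hx, by rw [hfalse]; exact Option.some_ne_none _⟩)

lemma isAutarky.applyPA_ssubset (h : isAutarky φ F) {C : Clause}
    (hC : C ∈ F) (hsat : satClause φ C) : applyPA φ F ⊂ F := by
  rw [h.applyPA_eq_filter]
  exact Finset.filter_ssubset.mpr ⟨C, hC, not_not.mpr hsat⟩

lemma isAutarky.satCS_of_satCS_applyPA (h : isAutarky φ F)
    (hsat : satCS (applyPA φ F)) : satCS F := by
  rw [h.applyPA_eq_filter, satCS_iff] at hsat
  obtain ⟨ψ, hψ⟩ := hsat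
  rw [satCS_iff]
  refine ⟨fun v => (φ v).or (ψ v), fun C hC => ?_⟩
  by_cases hφC : satClause φ C
  · obtain ⟨x, hx, hxt⟩ := hφC
    exact ⟨x, hx, show (φ x.1).or _ = _ by rw [hxt, Option.some_or]⟩
  · have huntouched : ∀ x ∈ C, φ x.1 = none := fun x hx => by
      by_contra hne
      exact hφC (h C hC ⟨x, hx, hne⟩)
    obtain ⟨x, hx, hxt⟩ := hψ C (Finset.mem_filter.mpr ⟨hC, hφC⟩)
    exact ⟨x, hx, show (φ x.1).or _ = _ by rw [huntouched x hx, Option.none_or]; exact hxt⟩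

end Autarky

lemma satCS_of_leanKernel_eq_empty (F : ClauseSet) (h : leanKernel F = ∅) : satCS F := by
  induction F using Finset.strongInduction with
  | H F ih =>
    by_cases hF : isLean F
    · rw [(leanKernel_eq_empty_iff F).mp h F subset_rfl hF, satCS_iff]
      exact ⟨fun _ => none, by simp⟩
    obtain ⟨φ, haut, C, hC, hsat⟩ := exists_satClause_of_not_isLean hF
    have hsub := haut.applyPA_ssubset hC hsat
    refine haut.satCS_of_satCS_applyPA (ih _ hsub ?_)
    exact Finset.subset_empty.mp (h ▸ leanKernel_mono hsub.subset)

theorem sat_iff_leanKernel_empty (F : ClauseSet) :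
    satCS F ↔ leanKernel F = ∅ := by
  refine ⟨fun hsat => ?_, satCS_of_leanKernel_eq_empty F⟩
  obtain ⟨φ, hφ⟩ := (satCS_iff F).mp hsat
  exact (leanKernel_eq_empty_iff F).mpr fun G hGF hG =>
    hG.eq_empty_of_forall_satClause fun C hC => hφ C (hGF hC)
end

section
/- If φ is a quasi-maximal autarky for F (i.e., φ * F = Na(F)), then any extension of φ to a total assignment on var_aut(F) (assigning arbitrary values to variables of var_aut(F) \ var(φ)) is a maximal autarky for F. -/
open scoped Classical

def isMaxAutarky (φ : PAssign) (F : ClauseSet) : Prop :=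
  isAutarky φ F ∧ paVars φ ⊆ ↑(csVars F) ∧
  ∀ ψ : PAssign, isAutarky ψ F → paVars ψ ⊆ ↑(csVars F) →
    (∀ v b, φ v = some b → ψ v = some b) → ψ = φ

lemma lean_empty : isLean (∅ : ClauseSet) := by
  intro φ _ hsub v
  by_contra h
  have hv : v ∈ paVars φ := h
  have := hsub hv
  simp [csVars] at this

lemma restrict_autarky_none {F G : ClauseSet} (hF : isLean F) (hFG : F ⊆ G)
    (φ : PAssign) (haut : isAutarky φ G) : ∀ v ∈ csVars F, φ v = none := by
  set ψ : PAssign := fun w => if w ∈ csVars F then φ w else none with hψ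
  have hautψ : isAutarky ψ F := by
    intro C hC htouch
    obtain ⟨x, hx, hxne⟩ := htouch
    have hφx : φ x.1 ≠ none := by
      intro h
      apply hxne
      simp [hψ, h]
    obtain ⟨y, hy, hyt⟩ := haut C (hFG hC) ⟨x, hx, hφx⟩
    refine ⟨y, hy, ?_⟩
    have hyv : y.1 ∈ csVars F := by
      simp only [csVars, Finset.mem_biUnion]
      exact ⟨C, hC, Finset.mem_image_of_mem _ hy⟩
    simpa [litTrue, hψ, hyv] using hyt
  have hsub : paVars ψ ⊆ ↑(csVars F) := by
    intro w hw
    by_contra hwn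
    apply hw
    have hwn' : w ∉ csVars F := fun h => hwn (Finset.mem_coe.mpr h)
    simp [hψ, hwn']
  intro v hv
  have := hF ψ hautψ hsub v
  simpa [hψ, hv] using this

lemma lean_union {F G : ClauseSet} (hF : isLean F) (hG : isLean G) : isLean (F ∪ G) := by
  intro φ haut hsub v
  by_contra hv
  have hvmem : v ∈ csVars (F ∪ G) := hsub hv
  have hsplit : v ∈ csVars F ∨ v ∈ csVars G := by
    simp only [csVars, Finset.mem_biUnion, Finset.mem_union] at hvmem ⊢
    obtain ⟨C, hC | hC, hvC⟩ := hvmem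
    · exact Or.inl ⟨C, hC, hvC⟩
    · exact Or.inr ⟨C, hC, hvC⟩
  rcases hsplit with h | h
  · exact hv (restrict_autarky_none hF Finset.subset_union_left φ haut v h)
  · exact hv (restrict_autarky_none hG Finset.subset_union_right φ haut v h)

lemma leanKernel_lean (F : ClauseSet) : isLean (leanKernel F) := by
  unfold leanKernel
  apply Finset.sup_induction
  · exact lean_empty
  · exact fun a ha b hb => lean_union ha hb
  · intro t ht
    exact (Finset.mem_filter.mp ht).2

lemma leanKernel_subset (F : ClauseSet) : leanKernel F ⊆ F := by
  intro C hC
  unfold leanKernel at hC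
  rw [Finset.mem_sup] at hC
  obtain ⟨t, ht, hCt⟩ := hC
  exact (Finset.mem_powerset.mp (Finset.mem_filter.mp ht).1) hCt

lemma varAut_disjoint_kernel {F : ClauseSet} {v : Var} (hv : v ∈ varAut F)
    (hk : v ∈ csVars (leanKernel F)) : False := by
  obtain ⟨ψ, haut, hsub, hne⟩ := hv
  exact hne (restrict_autarky_none (leanKernel_lean F) (leanKernel_subset F) ψ haut v hk)

lemma varAut_subset (F : ClauseSet) : varAut F ⊆ ↑(csVars F) := by
  rintro v ⟨ψ, _, hsub, hne⟩
  exact hsub hne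

lemma untouched_mem_apply {φ : PAssign} {F : ClauseSet} {C : Clause}
    (hC : C ∈ F) (ht : ¬ touches φ C) : C ∈ applyPA φ F := by
  have hns : ¬ satClause φ C := by
    rintro ⟨x, hx, hxt⟩
    exact ht ⟨x, hx, by rw [hxt]; simp⟩
  have hfil : (C.filter fun x => ¬ litFalse φ x) = C := by
    apply Finset.filter_true_of_mem
    intro x hx hf
    exact ht ⟨x, hx, by rw [hf]; simp⟩
  exact Finset.mem_image.mpr ⟨C, Finset.mem_filter.mpr ⟨hC, hns⟩, hfil⟩

theorem quasi_maximal_extension_is_maximal (φ θ : PAssign) (F : ClauseSet)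
    (hφaut : isAutarky φ F) (hφvars : paVars φ ⊆ ↑(csVars F))
    (hquasi : applyPA φ F = leanKernel F)
    (hext : ∀ v b, φ v = some b → θ v = some b)
    (hθvars : paVars θ = varAut F) :
    isMaxAutarky θ F := by
  refine ⟨?_, ?_, ?_⟩
  · intro C hC htouch
    by_cases hφt : touches φ C
    · obtain ⟨x, hx, hxt⟩ := hφaut C hC hφt
      exact ⟨x, hx, hext _ _ hxt⟩
    · exfalso
      have hCk : C ∈ leanKernel F := hquasi ▸ untouched_mem_apply hC hφt
      obtain ⟨x, hx, hxne⟩ := htouch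
      have hxv : x.1 ∈ varAut F := hθvars ▸ hxne
      apply varAut_disjoint_kernel hxv
      simp only [csVars, Finset.mem_biUnion]
      exact ⟨C, hCk, Finset.mem_image_of_mem _ hx⟩
  · rw [hθvars]; exact varAut_subset F
  · intro ψ hψaut hψsub hψext
    funext v
    cases hθv : θ v with
    | some b => exact hψext v b hθv
    | none =>
      by_contra hne
      have hvA : v ∈ varAut F := ⟨ψ, hψaut, hψsub, hne⟩
      have hvθ : v ∈ paVars θ := hθvars ▸ hvA
      exact hvθ hθv
end
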